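/- arXiv:2401.15781 — 2 statements merged into one kernel-verified Lean document; each statement's English description precedes it below -/
import Mathlib

section
/- Let Π be a finite family of subsets of a finite set V, with |Π| ≥ 1. Then there exists a coloring χ : V → {-1,+1} such that for every set π ∈ Π, |∑_{v∈π} χ(v)| ≤ √(2·|π|·ln(4·|Π|)). -/
open Finset Real

section aux
variable {V : Type*} [Fintype V] [DecidableEq V]

noncomputable def epsR : Bool → ℝ := fun b => if b then 1 else -1

noncomputable def Sm (p : Finset V) (χ : V → Bool) : ℝ := ∑ v ∈ p, epsR (χ v)

lemma mgf_le (p : Finset V) (l : ℝ) :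
    ∑ χ : V → Bool, Real.exp (l * Sm p χ)
      ≤ 2 ^ Fintype.card V * Real.exp (l ^ 2 * p.card / 2) := by
  have h1 : ∀ χ : V → Bool, Real.exp (l * Sm p χ)
      = ∏ v, (if v ∈ p then Real.exp (l * epsR (χ v)) else 1) := by
    intro χ
    rw [Finset.prod_ite_mem, Finset.univ_inter, Sm, Finset.mul_sum, Real.exp_sum]
  simp_rw [h1]
  rw [← Fintype.prod_sum (fun v b => if v ∈ p then Real.exp (l * epsR b) else 1)]
  have h2 : ∀ v : V, (∑ b : Bool, if v ∈ p then Real.exp (l * epsR b) else 1)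
      = if v ∈ p then Real.exp l + Real.exp (-l) else 2 := by
    intro v
    by_cases hv : v ∈ p <;> simp [hv, epsR, Fintype.sum_bool, add_comm]
  simp_rw [h2]
  rw [Finset.prod_ite, Finset.prod_const, Finset.prod_const]
  have hc1 : (Finset.univ.filter (· ∈ p)).card = p.card := by
    simp [Finset.filter_mem_eq_inter]
  have hc2 : (Finset.univ.filter (· ∉ p)).card = Fintype.card V - p.card := by
    rw [← Finset.card_univ, ← hc1]
    rw [Finset.filter_not, Finset.card_sdiff_of_subset (Finset.filter_subset _ _)]
  rw [hc1, hc2]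
  have key : Real.exp l + Real.exp (-l) ≤ 2 * Real.exp (l ^ 2 / 2) := by
    have := Real.cosh_le_exp_half_sq l
    rw [Real.cosh_eq] at this
    linarith
  calc (Real.exp l + Real.exp (-l)) ^ p.card * 2 ^ (Fintype.card V - p.card)
      ≤ (2 * Real.exp (l ^ 2 / 2)) ^ p.card * 2 ^ (Fintype.card V - p.card) := by
        gcongr
    _ = 2 ^ p.card * 2 ^ (Fintype.card V - p.card) * Real.exp (l ^ 2 / 2) ^ p.card := by
        ring
    _ = 2 ^ Fintype.card V * Real.exp (l ^ 2 * p.card / 2) := by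
        rw [← pow_add, ← Real.exp_nat_mul,
          Nat.add_sub_cancel' (p.card_le_univ.trans_eq Finset.card_univ)]
        congr 1
        ring

end aux

section aux2
variable {V : Type*} [Fintype V] [DecidableEq V]

lemma tail (p : Finset V) (t l : ℝ) (hl : 0 ≤ l) :
    ((Finset.univ.filter (fun χ : V → Bool => t < Sm p χ)).card : ℝ) * Real.exp (l * t)
      ≤ 2 ^ Fintype.card V * Real.exp (l ^ 2 * p.card / 2) := by
  calc ((Finset.univ.filter (fun χ : V → Bool => t < Sm p χ)).card : ℝ) * Real.exp (l * t)
      = ∑ χ ∈ Finset.univ.filter (fun χ : V → Bool => t < Sm p χ), Real.exp (l * t) := by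
        rw [Finset.sum_const, nsmul_eq_mul]
    _ ≤ ∑ χ ∈ Finset.univ.filter (fun χ : V → Bool => t < Sm p χ), Real.exp (l * Sm p χ) := by
        apply Finset.sum_le_sum
        intro χ hχ
        rw [Finset.mem_filter] at hχ
        exact Real.exp_le_exp.2 (mul_le_mul_of_nonneg_left hχ.2.le hl)
    _ ≤ ∑ χ : V → Bool, Real.exp (l * Sm p χ) := by
        apply Finset.sum_le_sum_of_subset_of_nonneg (Finset.filter_subset _ _)
        intro χ _ _
        positivity
    _ ≤ 2 ^ Fintype.card V * Real.exp (l ^ 2 * p.card / 2) := mgf_le p l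

lemma neg_card (p : Finset V) (t : ℝ) :
    (Finset.univ.filter (fun χ : V → Bool => t < -Sm p χ)).card
      = (Finset.univ.filter (fun χ : V → Bool => t < Sm p χ)).card := by
  have hneg : ∀ χ : V → Bool, Sm p (fun v => !(χ v)) = -Sm p χ := by
    intro χ
    rw [Sm, Sm, ← Finset.sum_neg_distrib]
    apply Finset.sum_congr rfl
    intro v _
    cases h : χ v <;> simp [epsR, h]
  apply Finset.card_bij' (fun χ _ => fun v => !(χ v)) (fun χ _ => fun v => !(χ v))
  · intro χ hχ
    rw [Finset.mem_filter] at hχ ⊢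
    exact ⟨Finset.mem_univ _, by rw [hneg]; exact hχ.2⟩
  · intro χ hχ
    rw [Finset.mem_filter] at hχ ⊢
    refine ⟨Finset.mem_univ _, ?_⟩
    rw [hneg]; linarith [hχ.2]
  · intro χ _; funext v; simp
  · intro χ _; funext v; simp

lemma tail_bound (m : ℕ) (hm : 1 ≤ m) (p : Finset V) :
    ((Finset.univ.filter (fun χ : V → Bool =>
        Real.sqrt (2 * p.card * Real.log (4 * m)) < Sm p χ)).card : ℝ)
      ≤ 2 ^ Fintype.card V / (4 * m) := by
  have hm' : (1 : ℝ) ≤ 4 * m := by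
    have : (1:ℝ) ≤ (m:ℝ) := by exact_mod_cast hm
    linarith
  have hm0 : (0 : ℝ) < 4 * m := by linarith
  have hL : 0 ≤ Real.log (4 * m) := Real.log_nonneg hm'
  set L : ℝ := Real.log (4 * m) with hLdef
  set t : ℝ := Real.sqrt (2 * p.card * L) with htdef
  have ht0 : 0 ≤ t := Real.sqrt_nonneg _
  rcases Nat.eq_zero_or_pos p.card with hn | hn
  · have hp : p = ∅ := Finset.card_eq_zero.1 hn
    have : (Finset.univ.filter (fun χ : V → Bool => t < Sm p χ)) = ∅ := by
      apply Finset.filter_false_of_mem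
      intro χ _
      rw [hp, Sm, Finset.sum_empty]
      linarith
    rw [this]
    simp only [Finset.card_empty, Nat.cast_zero]
    positivity
  · set n : ℝ := (p.card : ℝ) with hndef
    have hn0 : (0 : ℝ) < n := by rw [hndef]; exact_mod_cast hn
    have ht2 : t ^ 2 = 2 * n * L := Real.sq_sqrt (by positivity)
    set l : ℝ := t / n with hldef
    have hl0 : 0 ≤ l := by positivity
    have key := tail p t l hl0
    have e1 : l * t = 2 * L := by
      rw [hldef]
      field_simp
      nlinarith [ht2]
    have e2 : l ^ 2 * n / 2 = L := by
      rw [hldef]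
      field_simp
      nlinarith [ht2]
    rw [e1, ← hndef, e2] at key
    have eexp : Real.exp (2 * L) = (4 * m) ^ 2 := by
      rw [two_mul, Real.exp_add, hLdef, Real.exp_log hm0]
      ring
    have eexp2 : Real.exp L = 4 * m := Real.exp_log hm0
    rw [eexp, eexp2] at key
    rw [le_div_iff₀ hm0]
    nlinarith [key, hm0]

end aux2

lemma abs_tail_bound {V : Type*} [Fintype V] [DecidableEq V] (m : ℕ) (hm : 1 ≤ m) (p : Finset V) :
    ((Finset.univ.filter (fun χ : V → Bool =>
        Real.sqrt (2 * p.card * Real.log (4 * m)) < |Sm p χ|)).card : ℝ)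
      ≤ 2 ^ Fintype.card V / (2 * m) := by
  set t : ℝ := Real.sqrt (2 * p.card * Real.log (4 * m)) with htdef
  have hsub : Finset.univ.filter (fun χ : V → Bool => t < |Sm p χ|)
      ⊆ (Finset.univ.filter (fun χ : V → Bool => t < Sm p χ))
        ∪ (Finset.univ.filter (fun χ : V → Bool => t < -Sm p χ)) := by
    intro χ hχ
    rw [Finset.mem_filter] at hχ
    rw [Finset.mem_union, Finset.mem_filter, Finset.mem_filter]
    rcases lt_abs.mp hχ.2 with h | h
    · exact Or.inl ⟨Finset.mem_univ _, h⟩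
    · exact Or.inr ⟨Finset.mem_univ _, h⟩
  have h1 : ((Finset.univ.filter (fun χ : V → Bool => t < |Sm p χ|)).card : ℝ)
      ≤ ((Finset.univ.filter (fun χ : V → Bool => t < Sm p χ)).card : ℝ)
        + ((Finset.univ.filter (fun χ : V → Bool => t < -Sm p χ)).card : ℝ) := by
    have := (Finset.card_le_card hsub).trans (Finset.card_union_le _ _)
    exact_mod_cast this
  rw [neg_card] at h1
  have h2 := tail_bound m hm p
  rw [← htdef] at h2
  have hm0 : (0 : ℝ) < m := by exact_mod_cast hm
  calc ((Finset.univ.filter (fun χ : V → Bool => t < |Sm p χ|)).card : ℝ)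
      ≤ 2 * (2 ^ Fintype.card V / (4 * m)) := by linarith
    _ = 2 ^ Fintype.card V / (2 * m) := by field_simp; ring

/-- Any finite family of subsets of a finite set admits a ±1 coloring with
discrepancy at most √(2|π|ln(4|Π|)) on every set π. -/
theorem stmt0 {V : Type*} [Fintype V] [DecidableEq V]
    (P : Finset (Finset V)) (hP : 1 ≤ P.card) :
    ∃ χ : V → ℤ, (∀ v, χ v = 1 ∨ χ v = -1) ∧
      ∀ p ∈ P, |(∑ v ∈ p, (χ v : ℝ))| ≤
        Real.sqrt (2 * p.card * Real.log (4 * P.card)) := by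
  classical
  set m := P.card with hmdef
  set N := Fintype.card V with hN
  have hm0 : (0 : ℝ) < m := by exact_mod_cast hP
  set Bad : Finset (V → Bool) := P.biUnion (fun p => Finset.univ.filter
      (fun χ : V → Bool => Real.sqrt (2 * p.card * Real.log (4 * m)) < |Sm p χ|)) with hBad
  have hcard : (Bad.card : ℝ) < 2 ^ N := by
    have step1 : (Bad.card : ℝ) ≤ ∑ p ∈ P, ((Finset.univ.filter
        (fun χ : V → Bool => Real.sqrt (2 * p.card * Real.log (4 * m)) < |Sm p χ|)).card : ℝ) := by
      rw [hBad]
      exact_mod_cast Finset.card_biUnion_le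
    have step2 : ∑ p ∈ P, ((Finset.univ.filter
        (fun χ : V → Bool => Real.sqrt (2 * p.card * Real.log (4 * m)) < |Sm p χ|)).card : ℝ)
        ≤ ∑ p ∈ P, (2 ^ N / (2 * m) : ℝ) :=
      Finset.sum_le_sum (fun p _ => abs_tail_bound m hP p)
    have step3 : ∑ p ∈ P, (2 ^ N / (2 * m) : ℝ) = 2 ^ N / 2 := by
      rw [Finset.sum_const, ← hmdef, nsmul_eq_mul]
      field_simp
    have h2N : (0 : ℝ) < 2 ^ N := by positivity
    linarith
  have hcardN : Bad.card < Fintype.card (V → Bool) := by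
    have h2 : Fintype.card (V → Bool) = 2 ^ N := by
      rw [Fintype.card_fun, Fintype.card_bool]
    rw [h2]
    exact_mod_cast hcard
  obtain ⟨χ, hχ⟩ : ∃ χ : V → Bool, χ ∉ Bad := by
    by_contra h
    push_neg at h
    have : Finset.univ ⊆ Bad := fun χ _ => h χ
    have := Finset.card_le_card this
    rw [Finset.card_univ] at this
    omega
  refine ⟨fun v => if χ v then 1 else -1, fun v => by by_cases h : χ v <;> simp [h], ?_⟩
  intro p hp
  have hsum : (∑ v ∈ p, ((if χ v then (1:ℤ) else -1 : ℤ) : ℝ)) = Sm p χ := by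
    rw [Sm]
    apply Finset.sum_congr rfl
    intro v _
    by_cases h : χ v <;> simp [h, epsR]
  rw [hsum]
  by_contra hcon
  push_neg at hcon
  apply hχ
  rw [hBad, Finset.mem_biUnion]
  exact ⟨p, hp, Finset.mem_filter.2 ⟨Finset.mem_univ _, hcon⟩⟩
end

section
/- Let A be a positive semidefinite real n × n matrix. Then γ₂(A) = max_{1 ≤ i ≤ n} A_{ii}, where γ₂(A) = min{ ‖L‖_{2→∞}·‖R‖_{1→2} : A = LR }. -/
/-!
Every factorization `A = L * R` gives `A i i = ⟨row i of L, column i of R⟩`, so by Cauchy–Schwarz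
each diagonal entry is at most the cost `(max row norm of L) * (max column norm of R)`.
Conversely, a positive semidefinite `A` factors as `A = Bᴴ * B`, and then row `i` of `Bᴴ` and
column `i` of `B` both have squared norm `A i i`, so this factorization costs exactly
`max_i A i i`.
-/

open Matrix

theorem Real.sqrt_iSup {ι : Sort*} {f : ι → ℝ} (hf : BddAbove (Set.range f)) :
    √(⨆ i, f i) = ⨆ i, √(f i) := by
  cases isEmpty_or_nonempty ι
  · simp
  · exact Monotone.map_ciSup_of_continuousAt Real.continuous_sqrt.continuousAt
      (fun _ _ h ↦ Real.sqrt_le_sqrt h) hf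

namespace Matrix

variable {m n k : Type*}

theorem mul_apply_le_sqrt_mul_sqrt [Fintype k] (L : Matrix m k ℝ) (R : Matrix k n ℝ)
    (i : m) (j : n) : (L * R) i j ≤ √(∑ l, L i l ^ 2) * √(∑ l, R l j ^ 2) :=
  Real.sum_mul_le_sqrt_mul_sqrt _ _ _

theorem iSup_diag_mul_le [Fintype m] [Fintype k] (L : Matrix m k ℝ) (R : Matrix k m ℝ) :
    ⨆ i, (L * R) i i ≤ (⨆ i, √(∑ j, L i j ^ 2)) * (⨆ j, √(∑ i, R i j ^ 2)) := by
  have hL := Finite.bddAbove_range fun i ↦ √(∑ j, L i j ^ 2)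
  have hR := Finite.bddAbove_range fun j ↦ √(∑ i, R i j ^ 2)
  have hL₀ : 0 ≤ ⨆ i, √(∑ j, L i j ^ 2) := Real.iSup_nonneg fun _ ↦ Real.sqrt_nonneg _
  refine Real.iSup_le (fun i ↦ ?_) (mul_nonneg hL₀ (Real.iSup_nonneg fun _ ↦ Real.sqrt_nonneg _))
  exact (mul_apply_le_sqrt_mul_sqrt L R i i).trans
    (mul_le_mul (le_ciSup hL i) (le_ciSup hR i) (Real.sqrt_nonneg _) hL₀)

theorem conjTranspose_mul_self_apply_self [Fintype k] (B : Matrix k m ℝ) (i : m) :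
    (Bᴴ * B) i i = ∑ l, B l i ^ 2 := by
  simp [mul_apply, sq]

end Matrix

theorem stmt17_general (n : ℕ) (A : Matrix (Fin n) (Fin n) ℝ)
    (hA : A.PosSemidef) :
    sInf {r : ℝ | ∃ (k : ℕ) (L : Matrix (Fin n) (Fin k) ℝ)
        (R : Matrix (Fin k) (Fin n) ℝ), A = L * R ∧
        r = (⨆ i, Real.sqrt (∑ j, (L i j) ^ 2)) *
            (⨆ j, Real.sqrt (∑ i, (R i j) ^ 2))} =
      ⨆ i, A i i := by
  refine IsLeast.csInf_eq ⟨?_, ?_⟩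
  · have hdiag : 0 ≤ ⨆ i, A i i := Real.iSup_nonneg fun _ ↦ hA.diag_nonneg
    obtain ⟨B, rfl⟩ : ∃ B : Matrix (Fin n) (Fin n) ℝ, A = Bᴴ * B := by
      open scoped MatrixOrder in
      exact CStarAlgebra.nonneg_iff_eq_star_mul_self.mp hA.nonneg
    refine ⟨n, Bᴴ, B, rfl, ?_⟩
    simp only [conjTranspose_apply, star_trivial, ← conjTranspose_mul_self_apply_self]
    rw [← Real.sqrt_iSup (Finite.bddAbove_range _), Real.mul_self_sqrt hdiag]
  · rintro r ⟨k, L, R, rfl, rfl⟩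
    exact iSup_diag_mul_le L R

/-- Schur: for a positive semidefinite real n × n matrix A, the
factorization norm γ₂(A) = inf{‖L‖_{2→∞}·‖R‖_{1→2} : A = LR} equals the
largest diagonal entry of A. Here ‖L‖_{2→∞} is the maximum Euclidean norm
of a row of L and ‖R‖_{1→2} the maximum Euclidean norm of a column of R. -/
theorem stmt17 (n : ℕ) (hn : 0 < n) (A : Matrix (Fin n) (Fin n) ℝ)
    (hA : A.PosSemidef) :
    sInf {r : ℝ | ∃ (k : ℕ) (L : Matrix (Fin n) (Fin k) ℝ)
        (R : Matrix (Fin k) (Fin n) ℝ), A = L * R ∧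
        r = (⨆ i, Real.sqrt (∑ j, (L i j) ^ 2)) *
            (⨆ j, Real.sqrt (∑ i, (R i j) ^ 2))} =
      ⨆ i, A i i :=
  stmt17_general n A hA
end
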